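/- Let u be the phase shift of the pair (μ, ν) of finite positive compactly supported Borel measures on ℝ, and let x ∈ ℝ. Then: (a) μ({x}) > 0 if and only if ∫_{x−1}^{x+1} (π·χ_{(x, x+1)}(y) − u(y)) / (y − x) dy < ∞ (the integrand is nonnegative almost everywhere on (x−1, x+1)); (b) ν({x}) > 0 if and only if ∫_{x−1}^{x+1} (π·χ_{(x−1, x)}(y) − u(y)) / (x − y) dy < ∞ (again the integrand is nonnegative almost everywhere). -/

import Mathlib

open MeasureTheory Set Filter Real Topology
open scoped ENNReal

/-- The Cauchy transform `𝒦μ(z) = (1/π) ∫ (t - z)⁻¹ dμ(t)` of a positive measure on `ℝ`. -/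
noncomputable def cauchyTransform (μ : Measure ℝ) (z : ℂ) : ℂ :=
  (Real.pi : ℂ)⁻¹ * ∫ t, ((t : ℂ) - z)⁻¹ ∂μ

/-- The Cauchy transform of the measure `u(t) dt` for a function `u : ℝ → ℝ`. -/
noncomputable def cauchyTransformFn (u : ℝ → ℝ) (z : ℂ) : ℂ :=
  (Real.pi : ℂ)⁻¹ * ∫ t, (u t : ℂ) * ((t : ℂ) - z)⁻¹

/-- `u : ℝ → [0, π]` measurable with compact support is the phase shift of the pair
`(μ, ν)` if `1 + π𝒦μ(z) = exp(𝒦u(z)) = (1 − π𝒦ν(z))⁻¹` for all `z ∈ ℂ₊`. -/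
def IsPhaseShift (u : ℝ → ℝ) (μ ν : Measure ℝ) : Prop :=
  Measurable u ∧ (∀ x, u x ∈ Icc (0 : ℝ) Real.pi) ∧ HasCompactSupport u ∧
    ∀ z : ℂ, 0 < z.im →
      1 + (Real.pi : ℂ) * cauchyTransform μ z = Complex.exp (cauchyTransformFn u z) ∧
      Complex.exp (cauchyTransformFn u z) = (1 - (Real.pi : ℂ) * cauchyTransform ν z)⁻¹

/-!
Put `z = x + iy`. Since `y (1 + π𝒦μ(z)) → i μ{x}` as `y → 0⁺` and
`|1 + π𝒦μ(z)| = exp (Re 𝒦u(z)) = exp (π⁻¹ ∫ u(t) (t - x) / ((t - x)² + y²) dt)`,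
the mass `μ{x}` is the limit of `y · exp (Re 𝒦u(x + iy))`. The phase shift `π χ_(x,x+1)` of a
unit atom at `x` contributes exactly `-log y` to `Re 𝒦`, up to a term with a finite limit, so
`y · exp (Re 𝒦u(x + iy)) = exp (-π⁻¹ A(y) + O(1))`, where `A(y)` is the integral over
`(x - 1, x + 1)` of `(πχ - u)(t) (t - x) / ((t - x)² + y²)`. This integrand is nonnegative and
increases to `(πχ - u)(t) / (t - x)` as `y ↓ 0`, so by monotone convergence `μ{x} > 0` iff
`A` stays bounded iff the integral in (a) is finite. Part (b) is part (a) for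
`|1 - π𝒦ν| = exp (-Re 𝒦u)`, after the reflection `t ↦ -t`.
-/

open Filter Topology Real
open Complex (I)
open scoped ENNReal

noncomputable def conjPoissonKernel (x y t : ℝ) : ℝ := (t - x) / ((t - x) ^ 2 + y ^ 2)

lemma conjPoissonKernel_eq_re_inv (x y t : ℝ) :
    conjPoissonKernel x y t = ((t : ℂ) - (x + y * I))⁻¹.re := by
  simp [conjPoissonKernel, Complex.inv_re, Complex.normSq_apply]
  ring

lemma conjPoissonKernel_neg (x y t : ℝ) :
    conjPoissonKernel (-x) y (-t) = -conjPoissonKernel x y t := by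
  simp only [conjPoissonKernel]
  ring

lemma measurable_conjPoissonKernel (x y : ℝ) : Measurable (conjPoissonKernel x y) := by
  unfold conjPoissonKernel
  fun_prop

lemma norm_inv_ofReal_sub_le {z : ℂ} (hz : 0 < z.im) (t : ℝ) : ‖((t : ℂ) - z)⁻¹‖ ≤ z.im⁻¹ := by
  rw [norm_inv]
  refine inv_anti₀ hz ?_
  simpa [abs_of_pos hz] using Complex.abs_im_le_norm ((t : ℂ) - z)

lemma abs_conjPoissonKernel_le (x : ℝ) {y : ℝ} (hy : 0 < y) (t : ℝ) :
    |conjPoissonKernel x y t| ≤ y⁻¹ := by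
  rw [conjPoissonKernel_eq_re_inv]
  simpa using (Complex.abs_re_le_norm _).trans
    (norm_inv_ofReal_sub_le (z := x + y * I) (by simpa using hy) t)

lemma abs_conjPoissonKernel_le_one {x t : ℝ} (ht : 1 ≤ |t - x|) (y : ℝ) :
    |conjPoissonKernel x y t| ≤ 1 := by
  rw [conjPoissonKernel, abs_div, abs_of_nonneg (add_nonneg (sq_nonneg (t - x)) (sq_nonneg y))]
  refine div_le_one_of_le₀ ?_ (by positivity)
  nlinarith [sq_abs (t - x), sq_nonneg y]

lemma MeasureTheory.Integrable.mul_inv_ofReal_sub {μ : Measure ℝ} {f : ℝ → ℂ}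
    (hf : Integrable f μ) {z : ℂ} (hz : 0 < z.im) :
    Integrable (fun t : ℝ => f t * ((t : ℂ) - z)⁻¹) μ :=
  hf.mul_bdd (by fun_prop) (ae_of_all _ (norm_inv_ofReal_sub_le hz))

lemma MeasureTheory.Integrable.mul_conjPoissonKernel {μ : Measure ℝ} {f : ℝ → ℝ}
    (hf : Integrable f μ) (x : ℝ) {y : ℝ} (hy : 0 < y) :
    Integrable (fun t => f t * conjPoissonKernel x y t) μ :=
  hf.mul_bdd (measurable_conjPoissonKernel x y).aestronglyMeasurable
    (ae_of_all _ fun t => by simpa using abs_conjPoissonKernel_le x hy t)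

lemma re_cauchyTransformFn {u : ℝ → ℝ} (hu : Integrable u) (x : ℝ) {y : ℝ} (hy : 0 < y) :
    (cauchyTransformFn u (x + y * I)).re = π⁻¹ * ∫ t, u t * conjPoissonKernel x y t := by
  have hz : 0 < ((x : ℂ) + y * I).im := by simpa using hy
  have hint : Integrable (fun t : ℝ => (u t : ℂ) * ((t : ℂ) - (x + y * I))⁻¹) :=
    hu.ofReal.mul_inv_ofReal_sub hz
  have hre := integral_re hint
  simp only [RCLike.re_to_complex] at hre
  rw [cauchyTransformFn, ← Complex.ofReal_inv, Complex.re_ofReal_mul, ← hre]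
  simp [conjPoissonKernel_eq_re_inv]

lemma tendsto_integral_mul_inv_ofReal_sub (m : Measure ℝ) [IsFiniteMeasure m] (x : ℝ) :
    Tendsto (fun y : ℝ => ∫ t, (y : ℂ) * ((t : ℂ) - (x + y * I))⁻¹ ∂m) (𝓝[>] 0)
      (𝓝 (m.real {x} * I)) := by
  have hlim : ∀ t : ℝ, Tendsto (fun y : ℝ => (y : ℂ) * ((t : ℂ) - (x + y * I))⁻¹) (𝓝[>] 0)
      (𝓝 (({x} : Set ℝ).indicator (fun _ => I) t)) := by
    intro t
    rcases eq_or_ne t x with rfl | ht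
    · rw [indicator_of_mem (mem_singleton t)]
      refine tendsto_const_nhds.congr' (eventually_nhdsWithin_of_forall fun y (hy : 0 < y) => ?_)
      have : (y : ℂ) ≠ 0 := by exact_mod_cast hy.ne'
      beta_reduce
      rw [sub_add_cancel_left, inv_neg, mul_inv, Complex.inv_I, mul_neg,
        mul_inv_cancel_left₀ this, neg_neg]
    · rw [indicator_of_notMem (by simpa using ht)]
      have hcont : ContinuousAt (fun y : ℝ => (y : ℂ) * ((t : ℂ) - (x + y * I))⁻¹) 0 := by
        refine Complex.continuous_ofReal.continuousAt.mul (ContinuousAt.inv₀ (by fun_prop) ?_)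
        simpa [sub_eq_zero] using ht
      simpa using hcont.tendsto.mono_left nhdsWithin_le_nhds
  have hdom := tendsto_integral_filter_of_dominated_convergence (μ := m) (l := 𝓝[>] (0 : ℝ))
    (fun _ => (1 : ℝ))
    (eventually_nhdsWithin_of_forall fun y _ => by fun_prop)
    (eventually_nhdsWithin_of_forall fun y (hy : 0 < y) => ae_of_all _ fun t => by
      have := norm_inv_ofReal_sub_le (z := x + y * I) (by simpa using hy) t
      rw [norm_mul, Complex.norm_real, Real.norm_of_nonneg hy.le]
      simpa [hy.ne'] using mul_le_mul_of_nonneg_left this hy.le)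
    (integrable_const 1) (ae_of_all _ hlim)
  rwa [integral_indicator (measurableSet_singleton x), setIntegral_const, Complex.real_smul] at hdom

lemma tendsto_mul_norm_one_add_mul_cauchyTransform (m : Measure ℝ) [IsFiniteMeasure m] (x : ℝ)
    {ε : ℂ} (hε : ‖ε‖ = 1) :
    Tendsto (fun y : ℝ => y * ‖1 + ε * (π * cauchyTransform m (x + y * I))‖) (𝓝[>] 0)
      (𝓝 (m.real {x})) := by
  have hy : Tendsto (fun y : ℝ => (y : ℂ)) (𝓝[>] 0) (𝓝 0) :=
    (Complex.continuous_ofReal.tendsto' 0 0 Complex.ofReal_zero).mono_left nhdsWithin_le_nhds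
  have h := (hy.add ((tendsto_integral_mul_inv_ofReal_sub m x).const_mul ε)).norm
  rw [zero_add, norm_mul, hε, norm_mul, Complex.norm_I, Complex.norm_real, Real.norm_of_nonneg
    measureReal_nonneg, one_mul, mul_one] at h
  refine h.congr' (eventually_nhdsWithin_of_forall fun y (hy : 0 < y) => ?_)
  dsimp only
  rw [cauchyTransform, mul_inv_cancel_left₀ (Complex.ofReal_ne_zero.2 pi_ne_zero),
    integral_const_mul]
  set J := ∫ t, ((t : ℂ) - (x + y * I))⁻¹ ∂m
  rw [show (y : ℂ) + ε * (y * J) = y * (1 + ε * J) by ring, norm_mul, Complex.norm_real,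
    Real.norm_of_nonneg hy.le]

lemma integral_conjPoissonKernel_Ioo (x : ℝ) {y : ℝ} (hy : 0 < y) :
    ∫ t in Ioo x (x + 1), conjPoissonKernel x y t = log (1 + y ^ 2) / 2 - log y := by
  have hderiv : ∀ t ∈ uIcc x (x + 1),
      HasDerivAt (fun t => log ((t - x) ^ 2 + y ^ 2) / 2) (conjPoissonKernel x y t) t := by
    intro t _
    have hpos : (t - x) ^ 2 + y ^ 2 ≠ 0 := by positivity
    have hg : HasDerivAt (fun t => (t - x) ^ 2 + y ^ 2) (2 * (t - x)) t := by
      simpa using (((hasDerivAt_id t).sub_const x).pow 2).add_const (y ^ 2)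
    refine ((hg.log hpos).div_const 2).congr_deriv ?_
    rw [conjPoissonKernel]
    field_simp
  have hcont : Continuous (conjPoissonKernel x y) := by
    unfold conjPoissonKernel
    exact Continuous.div (by fun_prop) (by fun_prop) fun t => by positivity
  rw [← integral_Ioc_eq_integral_Ioo, ← intervalIntegral.integral_of_le (by linarith),
    intervalIntegral.integral_eq_sub_of_hasDerivAt hderiv (hcont.intervalIntegrable _ _)]
  simp [Real.log_pow]

lemma continuousAt_setIntegral_compl_mul_conjPoissonKernel {u : ℝ → ℝ} (hu : Integrable u)
    (x : ℝ) :
    ContinuousAt (fun y => ∫ t in (Ioo (x - 1) (x + 1))ᶜ, u t * conjPoissonKernel x y t) 0 := by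
  have hfar : ∀ t ∈ (Ioo (x - 1) (x + 1))ᶜ, 1 ≤ |t - x| := fun t ht => by
    rw [mem_compl_iff, mem_Ioo, not_and_or, not_lt, not_lt] at ht
    rcases ht with ht | ht
    · rw [abs_of_nonpos (by linarith)]; linarith
    · rw [abs_of_nonneg (by linarith)]; linarith
  refine continuousAt_of_dominated (bound := fun t => |u t|)
    (Eventually.of_forall fun y => (hu.1.mul
      (measurable_conjPoissonKernel x y).aestronglyMeasurable).restrict)
    (Eventually.of_forall fun y => (ae_restrict_iff' measurableSet_Ioo.compl).2
      (ae_of_all _ fun t ht => ?_)) hu.abs.integrableOn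
    ((ae_restrict_iff' measurableSet_Ioo.compl).2 (ae_of_all _ fun t ht => ?_))
  · rw [Real.norm_eq_abs, abs_mul]
    exact mul_le_of_le_one_right (abs_nonneg _) (abs_conjPoissonKernel_le_one (hfar t ht) y)
  · have htx : (t - x) ^ 2 + (0 : ℝ) ^ 2 ≠ 0 := by
      rw [zero_pow two_ne_zero, add_zero, ← sq_abs]
      exact pow_ne_zero 2 (by linarith [hfar t ht])
    unfold conjPoissonKernel
    exact continuousAt_const.mul (continuousAt_const.div (by fun_prop) htx)

section

variable {u : ℝ → ℝ} {x : ℝ}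

lemma integrableOn_pi_mul_indicator_sub (hu : Integrable u) :
    IntegrableOn (fun t => π * (Ioo x (x + 1)).indicator (fun _ => (1 : ℝ)) t - u t)
      (Ioo (x - 1) (x + 1)) :=
  (((integrableOn_const (C := (1 : ℝ)) measure_Ioo_lt_top.ne).indicator
    measurableSet_Ioo).const_mul π).sub hu.integrableOn

lemma pi_mul_indicator_sub_mul_nonneg (hu_bd : ∀ t, u t ∈ Icc 0 π) {t : ℝ}
    (ht : t ∈ Ioo (x - 1) (x + 1)) :
    0 ≤ (π * (Ioo x (x + 1)).indicator (fun _ => (1 : ℝ)) t - u t) * (t - x) := by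
  by_cases htx : x < t
  · rw [indicator_of_mem (show t ∈ Ioo x (x + 1) from ⟨htx, ht.2⟩), mul_one]
    exact mul_nonneg (sub_nonneg.2 (hu_bd t).2) (sub_nonneg.2 htx.le)
  · rw [indicator_of_notMem fun h => htx h.1, mul_zero, zero_sub]
    exact mul_nonneg_of_nonpos_of_nonpos (neg_nonpos.2 (hu_bd t).1) (by linarith)

lemma integral_mul_conjPoissonKernel_eq (hu : Integrable u) {y : ℝ} (hy : 0 < y) :
    ∫ t, u t * conjPoissonKernel x y t =
      π * (log (1 + y ^ 2) / 2 - log y)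
        - (∫ t in Ioo (x - 1) (x + 1),
            (π * (Ioo x (x + 1)).indicator (fun _ => (1 : ℝ)) t - u t) * conjPoissonKernel x y t)
        + ∫ t in (Ioo (x - 1) (x + 1))ᶜ, u t * conjPoissonKernel x y t := by
  set χ : ℝ → ℝ := (Ioo x (x + 1)).indicator fun _ => 1
  have hsplit : ∫ t in Ioo (x - 1) (x + 1), π * χ t * conjPoissonKernel x y t =
      (∫ t in Ioo (x - 1) (x + 1), (π * χ t - u t) * conjPoissonKernel x y t)
        + ∫ t in Ioo (x - 1) (x + 1), u t * conjPoissonKernel x y t := by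
    rw [← integral_add ((integrableOn_pi_mul_indicator_sub hu).mul_conjPoissonKernel x hy)
      (hu.integrableOn.mul_conjPoissonKernel x hy)]
    congr 1 with t
    ring
  have hχ : ∫ t in Ioo (x - 1) (x + 1), π * χ t * conjPoissonKernel x y t =
      π * (log (1 + y ^ 2) / 2 - log y) := by
    have : ∀ t, π * χ t * conjPoissonKernel x y t =
        (Ioo x (x + 1)).indicator (fun t => π * conjPoissonKernel x y t) t := fun t => by
      by_cases ht : t ∈ Ioo x (x + 1) <;> simp [χ, ht]
    simp only [this]
    rw [setIntegral_indicator measurableSet_Ioo,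
      inter_eq_right.2 (Ioo_subset_Ioo_left (by linarith)), integral_const_mul,
      integral_conjPoissonKernel_Ioo x hy]
  rw [← integral_add_compl (measurableSet_Ioo (a := x - 1) (b := x + 1))
    (hu.mul_conjPoissonKernel x hy)]
  linarith

end

lemma tendsto_ofReal_setIntegral_mul_conjPoissonKernel {f : ℝ → ℝ} {s : Set ℝ}
    (hs : MeasurableSet s) {x : ℝ} (hf : IntegrableOn f s) (hf_nonneg : ∀ t ∈ s, 0 ≤ f t * (t - x))
    {y : ℕ → ℝ} (hy_pos : ∀ n, 0 < y n) (hy_anti : Antitone y) (hy : Tendsto y atTop (𝓝 0)) :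
    Tendsto (fun n => ENNReal.ofReal (∫ t in s, f t * conjPoissonKernel x (y n) t)) atTop
      (𝓝 (∫⁻ t in s, ENNReal.ofReal (f t / (t - x)))) := by
  have hk : ∀ y t, f t * conjPoissonKernel x y t = f t * (t - x) / ((t - x) ^ 2 + y ^ 2) :=
    fun y t => mul_div_assoc _ _ _ |>.symm
  have hlim : ∀ t, f t / (t - x) = f t * (t - x) / ((t - x) ^ 2 + 0 ^ 2) := fun t => by
    rcases eq_or_ne (t - x) 0 with htx | htx
    · simp [htx]
    · field_simp
      ring
  have hlint : ∀ n, ENNReal.ofReal (∫ t in s, f t * conjPoissonKernel x (y n) t) =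
      ∫⁻ t in s, ENNReal.ofReal (f t * conjPoissonKernel x (y n) t) := fun n =>
    ofReal_integral_eq_lintegral_ofReal (hf.mul_conjPoissonKernel x (hy_pos n))
      (ae_restrict_of_forall_mem hs fun t ht => by
        simp only [Pi.zero_apply, hk]
        exact div_nonneg (hf_nonneg t ht) (by positivity))
  simp only [hlint]
  refine lintegral_tendsto_of_tendsto_of_monotone
    (fun n => ((hf.mul_conjPoissonKernel x (hy_pos n)).aemeasurable).ennreal_ofReal)
    ((ae_restrict_iff' hs).2 (ae_of_all _ fun t ht n m hnm => ?_)) (ae_of_all _ fun t => ?_)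
  · simp only [hk]
    refine ENNReal.ofReal_le_ofReal (div_le_div_of_nonneg_left (hf_nonneg t ht) ?_ ?_)
    · have := hy_pos m
      positivity
    · gcongr
      exacts [(hy_pos m).le, hy_anti hnm]
  · simp only [hk, hlim]
    refine ENNReal.tendsto_ofReal ?_
    rcases eq_or_ne (t - x) 0 with htx | htx
    · simp [htx]
    · exact tendsto_const_nhds.div (tendsto_const_nhds.add (hy.pow 2)) (by simp [htx])

lemma pos_iff_lt_top_of_tendsto_exp_neg {ι : Type*} {l : Filter ι} [l.NeBot] {g : ι → ℝ}
    {L : ℝ≥0∞} {a κ : ℝ} (hκ : 0 < κ) (hg : Tendsto (fun i => ENNReal.ofReal (g i)) l (𝓝 L))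
    (ha : Tendsto (fun i => exp (-(κ * g i))) l (𝓝 a)) :
    0 < a ↔ L < ⊤ := by
  rcases eq_top_or_lt_top L with rfl | hL
  · have h0 : Tendsto (fun i => exp (-(κ * g i))) l (𝓝 0) :=
      Real.tendsto_exp_neg_atTop_nhds_zero.comp
        ((ENNReal.tendsto_ofReal_nhds_top.1 hg).const_mul_atTop hκ)
    simp [tendsto_nhds_unique ha h0]
  · have hmax : Tendsto (fun i => max (g i) 0) l (𝓝 L.toReal) := by
      simpa [Function.comp_def, ENNReal.toReal_ofReal'] using (ENNReal.tendsto_toReal hL.ne).comp hg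
    have hle : exp (-(κ * L.toReal)) ≤ a :=
      le_of_tendsto_of_tendsto' ((continuous_exp.tendsto _).comp (hmax.const_mul κ).neg) ha
        fun i => exp_le_exp.2 (neg_le_neg (mul_le_mul_of_nonneg_left (le_max_left _ _) hκ.le))
    simpa [hL] using (exp_pos _).trans_le hle

theorem pos_iff_lintegral_lt_top_of_tendsto {u : ℝ → ℝ} (hu : Integrable u)
    (hu_bd : ∀ t, u t ∈ Icc 0 π) {x c : ℝ}
    (hc : Tendsto (fun y => y * exp (π⁻¹ * ∫ t, u t * conjPoissonKernel x y t)) (𝓝[>] 0)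
      (𝓝 c)) :
    0 < c ↔ (∫⁻ t in Ioo (x - 1) (x + 1), ENNReal.ofReal
      ((π * (Ioo x (x + 1)).indicator (fun _ => (1 : ℝ)) t - u t) / (t - x))) < ⊤ := by
  set A : ℝ → ℝ := fun y => ∫ t in Ioo (x - 1) (x + 1),
    (π * (Ioo x (x + 1)).indicator (fun _ => (1 : ℝ)) t - u t) * conjPoissonKernel x y t
  set h : ℝ → ℝ := fun y => log (1 + y ^ 2) / 2 +
    π⁻¹ * ∫ t in (Ioo (x - 1) (x + 1))ᶜ, u t * conjPoissonKernel x y t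
  -- `y · exp (π⁻¹ ∫ u k_y) = exp (-π⁻¹ A y + h y)`, where `h` is continuous at `0`
  have hA : Tendsto (fun y => exp (-(π⁻¹ * A y))) (𝓝[>] 0) (𝓝 (c * exp (-h 0))) := by
    have hh : ContinuousAt h 0 :=
      (show ContinuousAt (fun y : ℝ => log (1 + y ^ 2) / 2) 0 by fun_prop (disch := norm_num)).add
        ((continuousAt_setIntegral_compl_mul_conjPoissonKernel hu x).const_mul _)
    refine (hc.mul (hh.neg.rexp.tendsto.mono_left nhdsWithin_le_nhds)).congr'
      (eventually_nhdsWithin_of_forall fun y (hy : 0 < y) => ?_)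
    have hexp : -(π⁻¹ * A y) = log y + π⁻¹ * (∫ t, u t * conjPoissonKernel x y t) + -h y := by
      rw [integral_mul_conjPoissonKernel_eq hu hy]
      simp only [h, A]
      field_simp
      ring
    beta_reduce
    rw [Pi.neg_apply, hexp, exp_add, exp_add, exp_log hy]
  obtain ⟨y, hy_anti, hy_pos, hy⟩ := exists_seq_strictAnti_tendsto (0 : ℝ)
  rw [← mul_pos_iff_of_pos_right (exp_pos (-h 0))]
  exact pos_iff_lt_top_of_tendsto_exp_neg (inv_pos.2 pi_pos)
    (tendsto_ofReal_setIntegral_mul_conjPoissonKernel measurableSet_Ioo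
      (integrableOn_pi_mul_indicator_sub hu) (fun t => pi_mul_indicator_sub_mul_nonneg hu_bd)
      hy_pos hy_anti.antitone hy)
    (hA.comp (tendsto_nhdsWithin_iff.2 ⟨hy, Eventually.of_forall hy_pos⟩))

lemma integral_comp_neg_mul_conjPoissonKernel (u : ℝ → ℝ) (x y : ℝ) :
    ∫ t, u (-t) * conjPoissonKernel (-x) y t = -∫ t, u t * conjPoissonKernel x y t := by
  rw [← integral_neg, ← integral_neg_eq_self]
  congr 1 with t
  rw [neg_neg, conjPoissonKernel_neg, mul_neg]

lemma setLIntegral_Ioo_comp_neg (f : ℝ → ℝ≥0∞) (a b : ℝ) :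
    ∫⁻ t in Ioo a b, f (-t) = ∫⁻ t in Ioo (-b) (-a), f t := by
  simpa using (Measure.measurePreserving_neg (volume : Measure ℝ)).setLIntegral_comp_preimage_emb
    measurableEmbedding_neg f (Ioo (-b) (-a))

namespace IsPhaseShift

variable {u : ℝ → ℝ} {μ ν : Measure ℝ}

lemma integrable (hu : IsPhaseShift u μ ν) : Integrable u := by
  obtain ⟨hmeas, hbd, hcs, -⟩ := hu
  refine (integrableOn_iff_integrable_of_support_subset (subset_tsupport u)).1 ?_
  refine Measure.integrableOn_of_bounded hcs.measure_lt_top.ne hmeas.aestronglyMeasurable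
    (M := π) (ae_of_all _ fun t => ?_)
  rw [Real.norm_of_nonneg (hbd t).1]
  exact (hbd t).2

lemma norm_one_add_mul_cauchyTransform (hu : IsPhaseShift u μ ν) {z : ℂ} (hz : 0 < z.im) :
    ‖1 + π * cauchyTransform μ z‖ = exp (cauchyTransformFn u z).re := by
  rw [(hu.2.2.2 z hz).1, Complex.norm_exp]

lemma norm_one_sub_mul_cauchyTransform (hu : IsPhaseShift u μ ν) {z : ℂ} (hz : 0 < z.im) :
    ‖1 - π * cauchyTransform ν z‖ = exp (-(cauchyTransformFn u z).re) := by
  rw [inv_eq_iff_eq_inv.1 (hu.2.2.2 z hz).2.symm, ← Complex.exp_neg, Complex.norm_exp,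
    Complex.neg_re]

lemma tendsto_measureReal_fst (hu : IsPhaseShift u μ ν) [IsFiniteMeasure μ] (x : ℝ) :
    Tendsto (fun y => y * exp (π⁻¹ * ∫ t, u t * conjPoissonKernel x y t)) (𝓝[>] 0)
      (𝓝 (μ.real {x})) := by
  refine (tendsto_mul_norm_one_add_mul_cauchyTransform μ x (ε := 1) norm_one).congr'
    (eventually_nhdsWithin_of_forall fun y (hy : 0 < y) => ?_)
  rw [one_mul, hu.norm_one_add_mul_cauchyTransform (by simpa using hy),
    re_cauchyTransformFn hu.integrable x hy]

lemma tendsto_measureReal_snd (hu : IsPhaseShift u μ ν) [IsFiniteMeasure ν] (x : ℝ) :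
    Tendsto (fun y => y * exp (-(π⁻¹ * ∫ t, u t * conjPoissonKernel x y t))) (𝓝[>] 0)
      (𝓝 (ν.real {x})) := by
  refine (tendsto_mul_norm_one_add_mul_cauchyTransform ν x (ε := -1) (by simp)).congr'
    (eventually_nhdsWithin_of_forall fun y (hy : 0 < y) => ?_)
  rw [neg_one_mul, ← sub_eq_add_neg, hu.norm_one_sub_mul_cauchyTransform (by simpa using hy),
    re_cauchyTransformFn hu.integrable x hy]

lemma pos_measure_fst_iff (hu : IsPhaseShift u μ ν) [IsFiniteMeasure μ] (x : ℝ) :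
    0 < μ {x} ↔ (∫⁻ t in Ioo (x - 1) (x + 1), ENNReal.ofReal
      ((π * (Ioo x (x + 1)).indicator (fun _ => (1 : ℝ)) t - u t) / (t - x))) < ⊤ := by
  rw [← pos_iff_lintegral_lt_top_of_tendsto hu.integrable hu.2.1 (hu.tendsto_measureReal_fst x),
    measureReal_def, ENNReal.toReal_pos_iff, and_iff_left (measure_lt_top μ {x})]

lemma pos_measure_snd_iff (hu : IsPhaseShift u μ ν) [IsFiniteMeasure ν] (x : ℝ) :
    0 < ν {x} ↔ (∫⁻ t in Ioo (x - 1) (x + 1), ENNReal.ofReal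
      ((π * (Ioo (x - 1) x).indicator (fun _ => (1 : ℝ)) t - u t) / (x - t))) < ⊤ := by
  have hsnd := hu.tendsto_measureReal_snd x
  simp only [← integral_comp_neg_mul_conjPoissonKernel, ← mul_neg] at hsnd
  have hrefl := pos_iff_lintegral_lt_top_of_tendsto (u := fun t => u (-t)) hu.integrable.comp_neg
    (fun t => hu.2.1 (-t)) hsnd
  have hind : ∀ t, (Ioo (-x) (-x + 1)).indicator (fun _ => (1 : ℝ)) (-t) =
      (Ioo (x - 1) x).indicator (fun _ => (1 : ℝ)) t := fun t => by
    have : -t ∈ Ioo (-x) (-x + 1) ↔ t ∈ Ioo (x - 1) x := by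
      simp only [mem_Ioo]
      constructor <;> rintro ⟨h₁, h₂⟩ <;> constructor <;> linarith
    simp only [indicator_apply, this]
  rw [measureReal_def, ENNReal.toReal_pos_iff, and_iff_left (measure_lt_top ν {x}),
    show Ioo (-x - 1) (-x + 1) = Ioo (-(x + 1)) (-(x - 1)) by congr 1 <;> ring,
    ← setLIntegral_Ioo_comp_neg] at hrefl
  simp only [hind] at hrefl
  simpa only [neg_neg, sub_neg_eq_add, neg_add_eq_sub] using hrefl

end IsPhaseShift

theorem stmt9_general (μ ν : Measure ℝ) [IsFiniteMeasure μ] [IsFiniteMeasure ν]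
    (u : ℝ → ℝ) (hu : IsPhaseShift u μ ν) (x : ℝ) :
    (0 < μ {x} ↔
      (∫⁻ y in Ioo (x - 1) (x + 1),
        ENNReal.ofReal
          ((Real.pi * (Ioo x (x + 1)).indicator (fun _ => (1 : ℝ)) y - u y) / (y - x))) < ⊤) ∧
    (0 < ν {x} ↔
      (∫⁻ y in Ioo (x - 1) (x + 1),
        ENNReal.ofReal
          ((Real.pi * (Ioo (x - 1) x).indicator (fun _ => (1 : ℝ)) y - u y) / (x - y))) < ⊤) :=
  ⟨hu.pos_measure_fst_iff x, hu.pos_measure_snd_iff x⟩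

/-- Lemma 3.8 [M-P]. If `u` is the phase shift of `(μ, ν)`, then
(a) `μ({x}) > 0` iff `∫_{x−1}^{x+1} (π·χ_(x,x+1)(y) − u(y))/(y − x) dy < ∞`,
(b) `ν({x}) > 0` iff `∫_{x−1}^{x+1} (π·χ_(x−1,x)(y) − u(y))/(x − y) dy < ∞`;
in both cases the integrand is nonnegative (a.e.), so the integrals are taken in the
extended sense (`∫⁻` of the nonnegative integrand). -/
theorem stmt9 (μ ν : Measure ℝ) [IsFiniteMeasure μ] [IsFiniteMeasure ν]
    (hμsupp : ∃ R : ℝ, μ (Icc (-R) R)ᶜ = 0) (hνsupp : ∃ R : ℝ, ν (Icc (-R) R)ᶜ = 0)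
    (u : ℝ → ℝ) (hu : IsPhaseShift u μ ν) (x : ℝ) :
    (0 < μ {x} ↔
      (∫⁻ y in Ioo (x - 1) (x + 1),
        ENNReal.ofReal
          ((Real.pi * (Ioo x (x + 1)).indicator (fun _ => (1 : ℝ)) y - u y) / (y - x))) < ⊤) ∧
    (0 < ν {x} ↔
      (∫⁻ y in Ioo (x - 1) (x + 1),
        ENNReal.ofReal
          ((Real.pi * (Ioo (x - 1) x).indicator (fun _ => (1 : ℝ)) y - u y) / (x - y))) < ⊤) :=
  stmt9_general μ ν u hu x
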